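/- Quasi-periodicity of the explicit kernel ϑ in the spectral parameters: for every 1 ≤ j ≤ N and all admissible arguments, ϑ_ε(x₁, …, x_m | ζ₁, …, ζ_j q⁻², …, ζ_N) = s^N · r_ε(ζ_j) · (∏_{μ=1}^{m} (−z_j q⁻¹/x_μ)) · (∏_{k=1, k≠j}^{N} ζ_k/ζ_j) · ϑ_ε(x₁, …, x_m | ζ₁, …, ζ_N), where z_j = ζ_j² and r_ε(ζ) := ε ∏_{k=1}^{N−2m} t(ζ/ξ_k) with t(ζ) = ζ⁻¹ θ(qζ²|q⁴)/θ(qζ⁻²|q⁴). -/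

import Mathlib

noncomputable section

open scoped BigOperators

/-- The infinite q-Pochhammer symbol `(a; p)_∞ = ∏_{k ≥ 0} (1 - a pᵏ)`. -/
def qPoch (a p : ℂ) : ℂ := ∏' k : ℕ, (1 - a * p ^ k)

/-- The double infinite q-Pochhammer symbol `(a; p, p)_∞ = ∏_{k,l ≥ 0} (1 - a p^{k+l})`. -/
def qPoch2 (a p : ℂ) : ℂ := ∏' kl : ℕ × ℕ, (1 - a * p ^ (kl.1 + kl.2))

/-- `θ(z|p) = (z;p)_∞ (p/z;p)_∞`. -/
def theta (z p : ℂ) : ℂ := qPoch z p * qPoch (p / z) p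

/-- `t(ζ) = ζ⁻¹ θ(qζ²|q⁴)/θ(qζ⁻²|q⁴)`. -/
def tfun (q ζ : ℂ) : ℂ := ζ⁻¹ * theta (q * ζ ^ 2) (q ^ 4) / theta (q * (ζ ^ 2)⁻¹) (q ^ 4)

/-- `b(ζ) = (1-ζ²)q/(1-ζ²q²)`. -/
def Rb (q ζ : ℂ) : ℂ := (1 - ζ ^ 2) * q / (1 - ζ ^ 2 * q ^ 2)

/-- `c(ζ) = (1-q²)ζ/(1-ζ²q²)`. -/
def Rc (q ζ : ℂ) : ℂ := (1 - q ^ 2) * ζ / (1 - ζ ^ 2 * q ^ 2)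

/-- The six-vertex R-matrix; the index `0 : Fin 2` encodes `+` and `1 : Fin 2` encodes `−`.
Rows are the upper (outgoing) indices, columns the lower (incoming) indices. -/
def Rmat (q ζ : ℂ) : Matrix (Fin 2 × Fin 2) (Fin 2 × Fin 2) ℂ :=
  Matrix.of fun e f =>
    if e.1 = e.2 then (if f = e then 1 else 0)
    else if f = e then Rb q ζ
    else if f = (e.2, e.1) then Rc q ζ
    else 0

/-- The transposition `P(x⊗y) = y⊗x` on `V ⊗ V`. -/
def Pmat : Matrix (Fin 2 × Fin 2) (Fin 2 × Fin 2) ℂ :=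
  Matrix.of fun e f => if f = (e.2, e.1) then 1 else 0

/-- The scalar factor `S₀(ζ)` with `z = ζ²`. -/
def S0 (q ζ : ℂ) : ℂ :=
  ζ * qPoch (ζ ^ 2)⁻¹ (q ^ 4) * qPoch (ζ ^ 2 * q ^ 2) (q ^ 4) /
    (qPoch (ζ ^ 2) (q ^ 4) * qPoch ((ζ ^ 2)⁻¹ * q ^ 2) (q ^ 4))

/-- The scattering matrix `S(ζ) = S₀(ζ) R(ζ)`. -/
def Smat (q ζ : ℂ) : Matrix (Fin 2 × Fin 2) (Fin 2 × Fin 2) ℂ := S0 q ζ • Rmat q ζ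

/-- Admissibility of the argument of the S-matrix: all denominators occurring in
`S(ζ)` are nonzero. -/
def Sdef (q ζ : ℂ) : Prop :=
  ζ ≠ 0 ∧ 1 - ζ ^ 2 * q ^ 2 ≠ 0 ∧ qPoch (ζ ^ 2) (q ^ 4) ≠ 0 ∧
    qPoch ((ζ ^ 2)⁻¹ * q ^ 2) (q ^ 4) ≠ 0

/-- Kronecker (tensor) product of two operators on `V`. -/
def kron (A B : Matrix (Fin 2) (Fin 2) ℂ) : Matrix (Fin 2 × Fin 2) (Fin 2 × Fin 2) ℂ :=
  Matrix.of fun e f => A e.1 f.1 * B e.2 f.2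

/-- `D = diag(δ, δ⁻¹)`. -/
def Dmat (δ : ℂ) : Matrix (Fin 2) (Fin 2) ℂ :=
  Matrix.of fun i j => if i = j then (if i = 0 then δ else δ⁻¹) else 0

/-- `D̄ = diag(δ, −δ⁻¹)`. -/
def Dbar (δ : ℂ) : Matrix (Fin 2) (Fin 2) ℂ :=
  Matrix.of fun i j => if i = j then (if i = 0 then δ else -δ⁻¹) else 0

/-- The operator on `V^{⊗N}` acting as `M` on the `(j,k)`-th tensor factors and as the
identity elsewhere.  A vector of `V^{⊗N}` is encoded by its coordinates
`(Fin N → Fin 2) → ℂ` in the basis `v_{ε₁} ⊗ ⋯ ⊗ v_{ε_N}`. -/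
def embed2 {N : ℕ} (M : Matrix (Fin 2 × Fin 2) (Fin 2 × Fin 2) ℂ) (j k : Fin N) :
    Matrix (Fin N → Fin 2) (Fin N → Fin 2) ℂ :=
  Matrix.of fun a b =>
    M (a j, a k) (b j, b k) *
      ∏ i : Fin N, (if i = j ∨ i = k then 1 else if a i = b i then 1 else 0)

/-- The operator on `V^{⊗N}` acting as `M` on the `j`-th tensor factor. -/
def embed1 {N : ℕ} (M : Matrix (Fin 2) (Fin 2) ℂ) (j : Fin N) :
    Matrix (Fin N → Fin 2) (Fin N → Fin 2) ℂ :=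
  Matrix.of fun a b =>
    M (a j) (b j) * ∏ i : Fin N, (if i = j then 1 else if a i = b i then 1 else 0)

/-- Number of `−` signs (i.e. of indices equal to `1`) in a basis configuration. -/
def countMinus {N : ℕ} (a : Fin N → Fin 2) : ℕ :=
  (Finset.univ.filter fun i => a i = 1).card

/-- Membership in the weight subspace `V^{(n l)} ⊆ V^{⊗N}` (with `l = N - n`):
the coordinates vanish off configurations with exactly `n` minus signs. -/
def inVnl {N : ℕ} (n : ℕ) (v : (Fin N → Fin 2) → ℂ) : Prop :=
  ∀ a, countMinus a ≠ n → v a = 0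

/-- The vector `w ⊗ u_σ ∈ V^{⊗N}`, where `w ∈ V^{⊗(N-2)}` occupies the slots `0,…,N-3`
and `u_σ = v₋⊗v₊ + σ v₊⊗v₋` occupies the slots `N-2, N-1`. -/
def tensU {N : ℕ} (hN : 2 ≤ N) (σ : ℂ) (w : (Fin (N - 2) → Fin 2) → ℂ) :
    (Fin N → Fin 2) → ℂ :=
  fun a =>
    w (fun i => a ⟨i.1, by have := i.isLt; omega⟩) *
      (if a ⟨N - 2, by omega⟩ = 1 ∧ a ⟨N - 1, by omega⟩ = 0 then 1
       else if a ⟨N - 2, by omega⟩ = 0 ∧ a ⟨N - 1, by omega⟩ = 1 then σ else 0)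

/-- `P₁₂ P₂₃ ⋯ P_{N−1,N}` on `V^{⊗N}` (1-based labels; 0-based sites `0,…,N-1`). -/
def Pchain (N : ℕ) : Matrix (Fin N → Fin 2) (Fin N → Fin 2) ℂ :=
  (List.ofFn fun t : Fin (N - 1) =>
    embed2 Pmat ⟨t.1, by have := t.isLt; omega⟩ ⟨t.1 + 1, by have := t.isLt; omega⟩).prod

/-- `S_{1,…,N−2|N−1}(ζ₁,…,ζ_{N−2}|w) = S_{1,N−1}(ζ₁/w) ⋯ S_{N−2,N−1}(ζ_{N−2}/w)`
(1-based labels; the `j`-th spectral parameter `ζ_j` is `ζ (j-1)`). -/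
def SchainUp (q : ℂ) (N : ℕ) (ζ : ℕ → ℂ) (w : ℂ) :
    Matrix (Fin N → Fin 2) (Fin N → Fin 2) ℂ :=
  (List.ofFn fun t : Fin (N - 2) =>
    embed2 (Smat q (ζ t.1 / w)) ⟨t.1, by have := t.isLt; omega⟩
      ⟨N - 2, by have := t.isLt; omega⟩).prod

/-- `S_{N−1|1,…,N−2}(w|ζ₁,…,ζ_{N−2}) = S_{N−1,N−2}(w/ζ_{N−2}) ⋯ S_{N−1,1}(w/ζ₁)`. -/
def SchainDown (q : ℂ) (N : ℕ) (ζ : ℕ → ℂ) (w : ℂ) :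
    Matrix (Fin N → Fin 2) (Fin N → Fin 2) ℂ :=
  (List.ofFn fun t : Fin (N - 2) =>
    embed2 (Smat q (w / ζ (N - 3 - t.1))) ⟨N - 2, by have := t.isLt; omega⟩
      ⟨N - 3 - t.1, by have := t.isLt; omega⟩).prod

/-- `R_{N−1|1,…,N−2}(w|ζ₁,…,ζ_{N−2}) = R_{N−1,N−2}(w/ζ_{N−2}) ⋯ R_{N−1,1}(w/ζ₁)`. -/
def RchainDown (q : ℂ) (N : ℕ) (ζ : ℕ → ℂ) (w : ℂ) :
    Matrix (Fin N → Fin 2) (Fin N → Fin 2) ℂ :=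
  (List.ofFn fun t : Fin (N - 2) =>
    embed2 (Rmat q (w / ζ (N - 3 - t.1))) ⟨N - 2, by have := t.isLt; omega⟩
      ⟨N - 3 - t.1, by have := t.isLt; omega⟩).prod

/-- `R_{1,…,M−1|M}(ζ₁,…,ζ_{M−1}|w) = R_{1,M}(ζ₁/w) ⋯ R_{M−1,M}(ζ_{M−1}/w)` on `V^{⊗M}`. -/
def RchainUp (q : ℂ) (M : ℕ) (ζ : ℕ → ℂ) (w : ℂ) :
    Matrix (Fin M → Fin 2) (Fin M → Fin 2) ℂ :=
  (List.ofFn fun t : Fin (M - 1) =>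
    embed2 (Rmat q (ζ t.1 / w)) ⟨t.1, by have := t.isLt; omega⟩
      ⟨M - 1, by have := t.isLt; omega⟩).prod

/-- The action of `Δ^{(M-1)}(f₀)` on the tensor product of evaluation representations
with parameters `ζ 0, …, ζ (M-1)`:
`π(f₀) = Σ_j 1^{⊗j} ⊗ π_{ζ_j}(f₀) ⊗ π(t₀⁻¹) ⊗ ⋯ ⊗ π(t₀⁻¹)`, where
`π_ζ(f₀)v₊ = 0`, `π_ζ(f₀)v₋ = ζ⁻¹v₊`, `π_ζ(t₀⁻¹)v₊ = q v₊`, `π_ζ(t₀⁻¹)v₋ = q⁻¹ v₋`. -/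
def f0op (q : ℂ) (M : ℕ) (ζ : ℕ → ℂ) : Matrix (Fin M → Fin 2) (Fin M → Fin 2) ℂ :=
  ∑ j : Fin M, Matrix.of fun a b =>
    (if a j = 0 ∧ b j = 1 then (ζ j.1)⁻¹ else 0) *
      ∏ i : Fin M,
        (if i < j then (if a i = b i then 1 else 0)
         else if j < i then (if a i = b i then (if b i = 0 then q else q⁻¹) else 0)
         else 1)

/-- `M = tr_{N−1}( D̄_{N−1} R_{1,…,N−2|N−1}(ζ₁,…,ζ_{N−2}|ζ_{N−1}) ) ∈ End(V^{⊗(N−2)})`: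
partial trace over the last factor of `V^{⊗(N-1)}`. -/
def Mop (q δ : ℂ) (N : ℕ) (hN : 3 ≤ N) (ζ : ℕ → ℂ) :
    Matrix (Fin (N - 2) → Fin 2) (Fin (N - 2) → Fin 2) ℂ :=
  Matrix.of fun a b => ∑ e : Fin 2,
    (embed1 (N := N - 1) (Dbar δ) ⟨N - 2, by omega⟩ * RchainUp q (N - 1) ζ (ζ (N - 2)))
      (fun i => if h : i.1 < N - 2 then a ⟨i.1, h⟩ else e)
      (fun i => if h : i.1 < N - 2 then b ⟨i.1, h⟩ else e)

/-- `f(z) = (q⁵z;q⁴,q⁴)_∞ (q⁵/z;q⁴,q⁴)_∞ / ((q³z;q⁴,q⁴)_∞ (q³/z;q⁴,q⁴)_∞)`. -/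
def ffun (q z : ℂ) : ℂ :=
  qPoch2 (q ^ 5 * z) (q ^ 4) * qPoch2 (q ^ 5 / z) (q ^ 4) /
    (qPoch2 (q ^ 3 * z) (q ^ 4) * qPoch2 (q ^ 3 / z) (q ^ 4))

/-- `u = (−1)^{N−m} s^{N−6m} (∏_μ x_μ)(∏_k ξ_k) / (∏_j ζ_j)`, where `s² = q⁻¹`
(so that `s^{N-6m}` realizes `τ^{N/2-3m}` with `τ = q⁻¹`). -/
def uu (s : ℂ) (N m : ℕ) (ξ x ζ : ℕ → ℂ) : ℂ :=
  (-1) ^ (N - m) * s ^ ((N : ℤ) - 6 * (m : ℤ)) *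
    (∏ μ ∈ Finset.range m, x μ) * (∏ k ∈ Finset.range (N - 2 * m), ξ k) /
    (∏ j ∈ Finset.range N, ζ j)

/-- The explicit kernel
`ϑ_ε(x₁,…,x_m|ζ₁,…,ζ_N) = (∏_j ζ_j^{N−2m}) (∏_{μ<ν} x_μ θ(x_ν/x_μ|q²))
  ε^N θ(−εu|q²) (∏_{k,μ} θ(ξ_k²/x_μ|q⁴)) (∏_{j,k} f(z_j/ξ_k²))`, `z_j = ζ_j²`. -/
def vth (q s : ℂ) (N m : ℕ) (ξ : ℕ → ℂ) (ε : ℂ) (x ζ : ℕ → ℂ) : ℂ :=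
  (∏ j ∈ Finset.range N, ζ j ^ (N - 2 * m)) *
    (∏ μ ∈ Finset.range m, ∏ ν ∈ Finset.Ioo μ m, x μ * theta (x ν / x μ) (q ^ 2)) *
    (ε ^ N * theta (-ε * uu s N m ξ x ζ) (q ^ 2)) *
    (∏ k ∈ Finset.range (N - 2 * m), ∏ μ ∈ Finset.range m, theta (ξ k ^ 2 / x μ) (q ^ 4)) *
    (∏ j ∈ Finset.range N, ∏ k ∈ Finset.range (N - 2 * m), ffun q (ζ j ^ 2 / ξ k ^ 2))

/-! Shifting `ζ_{j0} ↦ ζ_{j0} q⁻²` rescales each factor of `ϑ` separately.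
The factor `∏ ζ_j^{N-2m}` picks up `q^{-2(N-2m)}`; the argument `u` of `θ(·|q²)` is multiplied
by `q²`, and `θ(q²w|q²) = -w⁻¹ θ(w|q²)`. For the factors `f(z_{j0}/ξ_k²)`, peeling one row off
each double product, `(a;q⁴,q⁴)_∞ = (a;q⁴)_∞ (aq⁴;q⁴,q⁴)_∞`, leaves a ratio of theta functions:
`f(z/q⁴) = -(q/z) θ(qz|q⁴)/θ(q/z|q⁴) f(z)`, which is `-q (ζ_{j0}/ξ_k)⁻¹ t(ζ_{j0}/ξ_k) f(z)`.
The remaining scalar prefactors collapse to the stated multiplier using `s² = q⁻¹` and `ε² = 1`. -/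

open Finset

section QSeries

variable {p : ℂ}

lemma multipliable_one_sub_mul_pow (a : ℂ) (hp : ‖p‖ < 1) :
    Multipliable fun k : ℕ => 1 - a * p ^ k := by
  simpa [sub_eq_add_neg] using multipliable_one_add_of_summable (f := fun k : ℕ => -(a * p ^ k))
    (by simpa [norm_mul, norm_pow] using
      (summable_geometric_of_lt_one (norm_nonneg p) hp).mul_left ‖a‖)

lemma multipliable_one_sub_mul_pow_add (a : ℂ) (hp : ‖p‖ < 1) :
    Multipliable fun kl : ℕ × ℕ => 1 - a * p ^ (kl.1 + kl.2) := by
  have hgeom : Summable fun k : ℕ => ‖p ^ k‖ := by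
    simpa [norm_pow] using summable_geometric_of_lt_one (norm_nonneg p) hp
  simpa [sub_eq_add_neg, pow_add, mul_assoc] using
    multipliable_one_add_of_summable (f := fun kl : ℕ × ℕ => -(a * (p ^ kl.1 * p ^ kl.2)))
      (by simpa [norm_mul, mul_assoc] using (hgeom.mul_norm hgeom).mul_left ‖a‖)

lemma qPoch_eq_one_sub_mul (a : ℂ) (hp : ‖p‖ < 1) :
    qPoch a p = (1 - a) * qPoch (a * p) p := by
  have hshift : ∀ k : ℕ, 1 - a * p ^ (k + 1) = 1 - a * p * p ^ k := fun k => by ring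
  rw [qPoch, tprod_eq_zero_mul' ((multipliable_one_sub_mul_pow (a * p) hp).congr
    fun k => (hshift k).symm)]
  simp only [pow_zero, mul_one, hshift, qPoch]

lemma qPoch2_eq_qPoch_mul (a : ℂ) (hp : ‖p‖ < 1) :
    qPoch2 a p = qPoch a p * qPoch2 (a * p) p := by
  let e : ℕ × ℕ ≃ ℕ × ℕ ⊕ ℕ :=
    ((Equiv.natEquivNatSumPUnit.{1}.prodCongr (Equiv.refl ℕ)).trans
      (Equiv.sumProdDistrib _ _ _)).trans (Equiv.sumCongr (Equiv.refl _) (Equiv.punitProd ℕ))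
  have he_inl : ∀ kl : ℕ × ℕ, e.symm (.inl kl) = (kl.1 + 1, kl.2) := fun _ => rfl
  have he_inr : ∀ l : ℕ, e.symm (.inr l) = (0, l) := fun _ => rfl
  clear_value e
  set f : ℕ × ℕ → ℂ := fun kl => 1 - a * p ^ (kl.1 + kl.2)
  have hrow : ∀ kl : ℕ × ℕ, f (e.symm (.inl kl)) = 1 - a * p * p ^ (kl.1 + kl.2) := fun kl => by
    simp only [f, he_inl]; ring
  have hcol : ∀ l : ℕ, f (e.symm (.inr l)) = 1 - a * p ^ l := fun l => by
    simp only [f, he_inr, zero_add]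
  have hrows : Multipliable fun kl => f (e.symm (.inl kl)) := by
    simpa only [hrow] using multipliable_one_sub_mul_pow_add (a * p) hp
  have hcols : Multipliable fun l => f (e.symm (.inr l)) := by
    simpa only [hcol] using multipliable_one_sub_mul_pow a hp
  calc qPoch2 a p = ∏' kl, f kl := rfl
    _ = (∏' kl, f (e.symm (.inl kl))) * ∏' l, f (e.symm (.inr l)) := by
      rw [← e.symm.tprod_eq f]
      exact Multipliable.tprod_sum hrows hcols
    _ = qPoch a p * qPoch2 (a * p) p := by
      rw [mul_comm]
      simp only [hrow, hcol, qPoch, qPoch2]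

lemma theta_inv (p : ℂ) (hp : ‖p‖ < 1) {z : ℂ} (hz : z ≠ 0) :
    theta z⁻¹ p = -z⁻¹ * theta z p := by
  rw [theta, theta, qPoch_eq_one_sub_mul z⁻¹ hp, qPoch_eq_one_sub_mul z hp]
  field_simp
  ring

lemma theta_nome_mul (hp : ‖p‖ < 1) (hp0 : p ≠ 0) {z : ℂ} (hz : z ≠ 0) :
    theta (p * z) p = -z⁻¹ * theta z p := by
  have hquot : p / (p * z) = z⁻¹ := by field_simp
  rw [← theta_inv p hp hz, theta, theta, hquot, div_inv_eq_mul, mul_comm]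

end QSeries

lemma ffun_div_pow_four {q : ℂ} (hq : ‖q‖ < 1) (hq0 : q ≠ 0) {z : ℂ} (hz : z ≠ 0)
    (hB : qPoch2 (q ^ 3 / z) (q ^ 4) ≠ 0) (hT : theta (q / z) (q ^ 4) ≠ 0) :
    ffun q (z / q ^ 4) = -(q / z) * theta (q * z) (q ^ 4) / theta (q / z) (q ^ 4) * ffun q z := by
  have hp : ‖q ^ 4‖ < 1 := by rw [norm_pow]; exact pow_lt_one₀ (norm_nonneg q) hq (by norm_num)
  have peel : ∀ a b : ℂ, a * q ^ 4 = b → qPoch2 a (q ^ 4) = qPoch a (q ^ 4) * qPoch2 b (q ^ 4) :=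
    fun a b h => h ▸ qPoch2_eq_qPoch_mul a hp
  have hθ : theta (q / z) (q ^ 4)
      = -(q / z) * (qPoch (z / q) (q ^ 4) * qPoch (q ^ 5 / z) (q ^ 4)) := by
    rw [← inv_div z q, theta_inv _ hp (div_ne_zero hz hq0), theta]
    field_simp
  have hpeel₁ := peel (q * z) (q ^ 5 * z) (by ring)
  have hpeel₂ := peel (z / q) (q ^ 3 * z) (by field_simp)
  have hpeel₃ := peel (q ^ 5 / z) (q ^ 9 / z) (by ring)
  have hpeel₄ := peel (q ^ 3 / z) (q ^ 7 / z) (by ring)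
  have hB' : qPoch (q ^ 3 / z) (q ^ 4) ≠ 0 := left_ne_zero_of_mul (hpeel₄ ▸ hB)
  have hT' : qPoch (q ^ 5 / z) (q ^ 4) ≠ 0 := right_ne_zero_of_mul (right_ne_zero_of_mul (hθ ▸ hT))
  have e₁ : q ^ 5 * (z / q ^ 4) = q * z := by field_simp
  have e₂ : q ^ 5 / (z / q ^ 4) = q ^ 9 / z := by field_simp
  have e₃ : q ^ 3 * (z / q ^ 4) = z / q := by field_simp
  have e₄ : q ^ 3 / (z / q ^ 4) = q ^ 7 / z := by field_simp
  have e₅ : q ^ 4 / (q * z) = q ^ 3 / z := by field_simp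
  rw [ffun, ffun, e₁, e₂, e₃, e₄, hθ, theta, e₅, hpeel₁, hpeel₂, hpeel₃, hpeel₄]
  field_simp

lemma ffun_sq_div_pow_four {q : ℂ} (hq : ‖q‖ < 1) (hq0 : q ≠ 0) {w : ℂ} (hw : w ≠ 0)
    (hB : qPoch2 (q ^ 3 / w ^ 2) (q ^ 4) ≠ 0) (hT : theta (q * (w ^ 2)⁻¹) (q ^ 4) ≠ 0) :
    ffun q (w ^ 2 / q ^ 4) = -q * w⁻¹ * tfun q w * ffun q (w ^ 2) := by
  rw [← div_eq_mul_inv] at hT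
  rw [ffun_div_pow_four hq hq0 (pow_ne_zero 2 hw) hB hT, tfun, ← div_eq_mul_inv]
  field_simp

lemma Finset.prod_apply_ite_eq_mul_prod {ι α M : Type*} [DecidableEq ι] [CommMonoid M]
    {s : Finset ι} {i : ι} (hi : i ∈ s) (g : α → M) (f : ι → α) {a : α} {c : M}
    (hc : g a = c * g (f i)) :
    ∏ j ∈ s, g (if j = i then a else f j) = c * ∏ j ∈ s, g (f j) := by
  rw [← mul_prod_erase s _ hi, ← mul_prod_erase s (fun j => g (f j)) hi, if_pos rfl, hc, mul_assoc,
    prod_congr rfl fun j hj => by rw [if_neg (ne_of_mem_erase hj)]]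

section Kernel

variable {q s ε : ℂ} {N m : ℕ} {ξ x ζ : ℕ → ℂ} {j0 : ℕ}

lemma uu_ne_zero (hs : s ≠ 0) (hξ : ∀ k < N - 2 * m, ξ k ≠ 0) (hx : ∀ ν < m, x ν ≠ 0)
    (hζ : ∀ j < N, ζ j ≠ 0) : uu s N m ξ x ζ ≠ 0 := by
  simpa [uu, prod_eq_zero_iff, zpow_ne_zero _ hs] using ⟨⟨hx, hξ⟩, hζ⟩

lemma uu_update (hj0 : j0 < N) :
    uu s N m ξ x (fun j => if j = j0 then ζ j0 / q ^ 2 else ζ j) = q ^ 2 * uu s N m ξ x ζ := by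
  have hprod : ∏ j ∈ range N, (if j = j0 then ζ j0 / q ^ 2 else ζ j)
      = (q ^ 2)⁻¹ * ∏ j ∈ range N, ζ j :=
    prod_apply_ite_eq_mul_prod (mem_range.mpr hj0) id ζ (div_eq_inv_mul _ _)
  rw [uu, uu, hprod]
  field_simp

lemma prod_ffun_update (hq1 : ‖q‖ < 1) (hq : q ≠ 0) (hξ : ∀ k < N - 2 * m, ξ k ≠ 0)
    (hζ0 : ζ j0 ≠ 0) (hj0 : j0 < N)
    (hden : ∀ k < N - 2 * m, qPoch2 (q ^ 3 / (ζ j0 ^ 2 / ξ k ^ 2)) (q ^ 4) ≠ 0)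
    (hdent : ∀ k < N - 2 * m, theta (q * ((ζ j0 / ξ k) ^ 2)⁻¹) (q ^ 4) ≠ 0) :
    ∏ j ∈ range N, ∏ k ∈ range (N - 2 * m),
        ffun q ((if j = j0 then ζ j0 / q ^ 2 else ζ j) ^ 2 / ξ k ^ 2)
      = (∏ k ∈ range (N - 2 * m), (-q * (ζ j0 / ξ k)⁻¹ * tfun q (ζ j0 / ξ k))) *
          ∏ j ∈ range N, ∏ k ∈ range (N - 2 * m), ffun q (ζ j ^ 2 / ξ k ^ 2) := by
  refine prod_apply_ite_eq_mul_prod (mem_range.mpr hj0)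
    (fun w => ∏ k ∈ range (N - 2 * m), ffun q (w ^ 2 / ξ k ^ 2)) ζ ?_
  rw [← prod_mul_distrib]
  refine prod_congr rfl fun k hk => ?_
  have hk' := mem_range.mp hk
  rw [show (ζ j0 / q ^ 2) ^ 2 / ξ k ^ 2 = (ζ j0 / ξ k) ^ 2 / q ^ 4 by ring, ← div_pow]
  exact ffun_sq_div_pow_four hq1 hq (div_ne_zero hζ0 (hξ k hk'))
    (by rw [div_pow]; exact hden k hk') (hdent k hk')

lemma vth_update (hq1 : ‖q‖ < 1) (hq : q ≠ 0) (hs : s ≠ 0) (hε : ε ≠ 0)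
    (hξ : ∀ k < N - 2 * m, ξ k ≠ 0) (hx : ∀ ν < m, x ν ≠ 0) (hζ : ∀ j < N, ζ j ≠ 0)
    (hj0 : j0 < N)
    (hden : ∀ k < N - 2 * m, qPoch2 (q ^ 3 / (ζ j0 ^ 2 / ξ k ^ 2)) (q ^ 4) ≠ 0)
    (hdent : ∀ k < N - 2 * m, theta (q * ((ζ j0 / ξ k) ^ 2)⁻¹) (q ^ 4) ≠ 0) :
    vth q s N m ξ ε x (fun j => if j = j0 then ζ j0 / q ^ 2 else ζ j)
      = ((q ^ 2) ^ (N - 2 * m))⁻¹ * (ε * uu s N m ξ x ζ)⁻¹ *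
          (∏ k ∈ range (N - 2 * m), (-q * (ζ j0 / ξ k)⁻¹ * tfun q (ζ j0 / ξ k))) *
          vth q s N m ξ ε x ζ := by
  have hq2 : ‖q ^ 2‖ < 1 := by rw [norm_pow]; exact pow_lt_one₀ (norm_nonneg q) hq1 (by norm_num)
  have hu : -ε * uu s N m ξ x ζ ≠ 0 := mul_ne_zero (neg_ne_zero.mpr hε) (uu_ne_zero hs hξ hx hζ)
  have hpow : ∏ j ∈ range N, (if j = j0 then ζ j0 / q ^ 2 else ζ j) ^ (N - 2 * m)
      = ((q ^ 2) ^ (N - 2 * m))⁻¹ * ∏ j ∈ range N, ζ j ^ (N - 2 * m) :=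
    prod_apply_ite_eq_mul_prod (mem_range.mpr hj0) (· ^ (N - 2 * m)) ζ
      (by rw [div_pow, div_eq_inv_mul])
  have hθ : theta (-ε * uu s N m ξ x (fun j => if j = j0 then ζ j0 / q ^ 2 else ζ j)) (q ^ 2)
      = (ε * uu s N m ξ x ζ)⁻¹ * theta (-ε * uu s N m ξ x ζ) (q ^ 2) := by
    rw [uu_update hj0, mul_left_comm, theta_nome_mul hq2 (pow_ne_zero 2 hq) hu]
    ring
  simp only [vth]
  rw [hpow, hθ, prod_ffun_update hq1 hq hξ (hζ j0 hj0) hj0 hden hdent]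
  ring

lemma quasi_period_prefactor (hq : q ≠ 0)
    (hs : s ^ 2 = q⁻¹) (hε : ε ^ 2 = 1) (hm : 2 * m ≤ N) (hξ : ∀ k < N - 2 * m, ξ k ≠ 0)
    (hx : ∀ ν < m, x ν ≠ 0) (hζ : ∀ j < N, ζ j ≠ 0) (hj0 : j0 < N) :
    ((q ^ 2) ^ (N - 2 * m))⁻¹ * (ε * uu s N m ξ x ζ)⁻¹ *
        ∏ k ∈ range (N - 2 * m), (-q * (ζ j0 / ξ k)⁻¹)
      = s ^ N * ε * (∏ μ ∈ range m, (-(ζ j0 ^ 2) / q / x μ)) *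
          ∏ k ∈ (range N).erase j0, ζ k / ζ j0 := by
  obtain ⟨K, rfl⟩ : ∃ K, N = K + 2 * m := ⟨N - 2 * m, by omega⟩
  have hs0 : s ≠ 0 := by rintro rfl; simp [eq_comm, hq] at hs
  have hε0 : ε ≠ 0 := by rintro rfl; simp at hε
  have hX : ∏ μ ∈ range m, x μ ≠ 0 := prod_ne_zero_iff.mpr fun μ hμ => hx μ (mem_range.mp hμ)
  simp only [uu, Nat.add_sub_cancel] at hξ ⊢
  have hΞ : ∏ k ∈ range K, ξ k ≠ 0 :=
    prod_ne_zero_iff.mpr fun k hk => hξ k (mem_range.mp hk)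
  have hE : ∏ k ∈ (range (K + 2 * m)).erase j0, ζ k ≠ 0 :=
    prod_ne_zero_iff.mpr fun k hk => hζ k (mem_range.mp (mem_of_mem_erase hk))
  have hζ0 : ζ j0 ≠ 0 := hζ j0 hj0
  have hzpow : s ^ (((K + 2 * m : ℕ) : ℤ) - 6 * (m : ℤ)) = s ^ (K + 2 * m) * q ^ (3 * m) := by
    rw [show ((K + 2 * m : ℕ) : ℤ) - 6 * (m : ℤ) = ((K + 2 * m : ℕ) : ℤ) - ((2 * (3 * m) : ℕ) : ℤ)
      by push_cast; ring, zpow_sub₀ hs0, zpow_natCast, zpow_natCast, pow_mul, hs, inv_pow,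
      div_inv_eq_mul]
  rw [hzpow, show K + 2 * m - m = K + m by omega, pow_add,
    ← mul_prod_erase _ ζ (mem_range.mpr hj0), prod_mul_distrib, prod_const, card_range,
    prod_inv_distrib, prod_div_distrib, prod_const, card_range, prod_div_distrib, prod_const,
    card_range, prod_div_distrib, prod_const, card_erase_of_mem (mem_range.mpr hj0), card_range,
    pow_sub₀ _ hζ0 (by omega), pow_one, neg_pow q, neg_div q, neg_pow (ζ j0 ^ 2 / q)]
  generalize ∏ μ ∈ range m, x μ = X at *
  generalize ∏ k ∈ range K, ξ k = Ξ at *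
  generalize ∏ k ∈ (range (K + 2 * m)).erase j0, ζ k = E at *
  have hσ : (s ^ (K + 2 * m)) ^ 2 = (q ^ (K + 2 * m))⁻¹ := by
    rw [← pow_mul, mul_comm, pow_mul, hs, inv_pow]
  have hsign : ((-1 : ℂ) ^ m) ^ 2 = 1 := by rw [← pow_mul, pow_mul', neg_one_sq, one_pow]
  field_simp
  rw [hsign, hε, hσ, div_pow]
  field_simp
  ring

end Kernel

theorem vth_z_quasi_periodicity_general (q : ℂ) (hq0 : 0 < ‖q‖) (hq1 : ‖q‖ < 1)
    (N m : ℕ) (hm : 2 * m ≤ N)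
    (ξ : ℕ → ℂ) (hξ : ∀ k < N - 2 * m, ξ k ≠ 0)
    (s : ℂ) (hs : s ^ 2 = q⁻¹) (ε : ℂ) (hε : ε = 1 ∨ ε = -1)
    (x ζ : ℕ → ℂ) (hx : ∀ ν < m, x ν ≠ 0) (hζ : ∀ j < N, ζ j ≠ 0)
    (hden : ∀ j < N, ∀ k < N - 2 * m,
      qPoch2 (q ^ 3 * (ζ j ^ 2 / ξ k ^ 2)) (q ^ 4) ≠ 0 ∧
      qPoch2 (q ^ 3 / (ζ j ^ 2 / ξ k ^ 2)) (q ^ 4) ≠ 0)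
    (j0 : ℕ) (hj0 : j0 < N)
    (hdent : ∀ k < N - 2 * m, theta (q * ((ζ j0 / ξ k) ^ 2)⁻¹) (q ^ 4) ≠ 0) :
    vth q s N m ξ ε x (fun j => if j = j0 then ζ j0 / q ^ 2 else ζ j)
      = s ^ N * (ε * ∏ k ∈ Finset.range (N - 2 * m), tfun q (ζ j0 / ξ k)) *
          (∏ μ ∈ Finset.range m, (-(ζ j0 ^ 2) / q / x μ)) *
          (∏ k ∈ (Finset.range N).erase j0, ζ k / ζ j0) * vth q s N m ξ ε x ζ := by
  have hq : q ≠ 0 := norm_pos_iff.mp hq0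
  have hs0 : s ≠ 0 := by rintro rfl; simp [eq_comm, hq] at hs
  have hε2 : ε ^ 2 = 1 := by rcases hε with rfl | rfl <;> norm_num
  have hε0 : ε ≠ 0 := by rintro rfl; simp at hε2
  rw [vth_update hq1 hq hs0 hε0 hξ hx hζ hj0 (fun k hk => (hden j0 hj0 k hk).2) hdent,
    prod_mul_distrib]
  linear_combination (∏ k ∈ range (N - 2 * m), tfun q (ζ j0 / ξ k)) * vth q s N m ξ ε x ζ *
    quasi_period_prefactor hq hs hε2 hm hξ hx hζ hj0

/-- Quasi-periodicity of the kernel `ϑ` in the spectral parameters: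
`ϑ_ε(x|ζ₁,…,ζ_j q⁻²,…,ζ_N) = s^N r_ε(ζ_j) (∏_μ (−z_j q⁻¹/x_μ)) (∏_{k≠j} ζ_k/ζ_j) ϑ_ε(x|ζ)`,
where `r_ε(ζ) = ε ∏_k t(ζ/ξ_k)` and `t(ζ) = ζ⁻¹ θ(qζ²|q⁴)/θ(qζ⁻²|q⁴)`. -/
theorem vth_z_quasi_periodicity (q : ℂ) (hq0 : 0 < ‖q‖) (hq1 : ‖q‖ < 1)
    (N m : ℕ) (hN : 1 ≤ N) (hm : 2 * m ≤ N)
    (ξ : ℕ → ℂ) (hξ : ∀ k < N - 2 * m, ξ k ≠ 0)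
    (s : ℂ) (hs : s ^ 2 = q⁻¹) (ε : ℂ) (hε : ε = 1 ∨ ε = -1)
    (x ζ : ℕ → ℂ) (hx : ∀ ν < m, x ν ≠ 0) (hζ : ∀ j < N, ζ j ≠ 0)
    (hden : ∀ j < N, ∀ k < N - 2 * m,
      qPoch2 (q ^ 3 * (ζ j ^ 2 / ξ k ^ 2)) (q ^ 4) ≠ 0 ∧
      qPoch2 (q ^ 3 / (ζ j ^ 2 / ξ k ^ 2)) (q ^ 4) ≠ 0)
    (j0 : ℕ) (hj0 : j0 < N)
    (hdent : ∀ k < N - 2 * m, theta (q * ((ζ j0 / ξ k) ^ 2)⁻¹) (q ^ 4) ≠ 0) :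
    vth q s N m ξ ε x (fun j => if j = j0 then ζ j0 / q ^ 2 else ζ j)
      = s ^ N * (ε * ∏ k ∈ Finset.range (N - 2 * m), tfun q (ζ j0 / ξ k)) *
          (∏ μ ∈ Finset.range m, (-(ζ j0 ^ 2) / q / x μ)) *
          (∏ k ∈ (Finset.range N).erase j0, ζ k / ζ j0) * vth q s N m ξ ε x ζ :=
  vth_z_quasi_periodicity_general q hq0 hq1 N m hm ξ hξ s hs ε hε x ζ hx hζ hden j0 hj0 hdent
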